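/- arXiv:1107.2248 — 7 statements merged into one kernel-verified Lean document; each statement's English description precedes it below -/
import Mathlib

section
/- For any integer k ≥ 1 and any finite multiset A of non-negative reals, Ψ_{k−1}(A)^k ≤ Ψ_k(A)^{k−1}. -/
/-- `hpoly k A` is the complete homogeneous sum of degree `k` in the elements
of the list `A` (sum of all monomials of total degree `k`). -/
noncomputable def hpoly : ℕ → List ℝ → ℝ
  | 0, _ => 1
  | _+1, [] => 0
  | k+1, a :: A => a * hpoly k (a :: A) + hpoly (k+1) A
termination_by k A => (k, A.length)

/-- `Psi k A = k! ·` (sum of all monomials of total degree `k` in the elements of `A`). -/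
noncomputable def Psi (k : ℕ) (A : List ℝ) : ℝ := (Nat.factorial k : ℝ) * hpoly k A

/-!
`Psi n A` is the `n`-th moment of `∑ aᵢ Eᵢ` with the `Eᵢ` independent standard exponential
variables. Concretely, the linear functional `L_A : Xⁿ ↦ Psi n A` satisfies
`L_{a :: A} p = ∫₀^∞ L_A (p (X + a x)) e^{-x} dx`, so by induction on `A` it is nonnegative on
every polynomial that is nonnegative on `[0, ∞)`. Applied to `X^m (X + t)²` for all real `t`,
this gives the log-convexity `Ψ_{m+1}² ≤ Ψ_m Ψ_{m+2}`, and a log-convex sequence with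
`Ψ_0 = 1` satisfies `Ψ_m^{m+1} ≤ Ψ_{m+1}^m`.
-/

open Polynomial MeasureTheory Set

lemma pow_succ_le_pow_of_sq_le_mul {s : ℕ → ℝ} (hs : ∀ n, 0 ≤ s n) (h0 : s 0 ≤ 1)
    (hlc : ∀ n, s (n + 1) ^ 2 ≤ s n * s (n + 2)) (m : ℕ) : s m ^ (m + 1) ≤ s (m + 1) ^ m := by
  induction m with
  | zero => simpa using h0
  | succ m ih =>
    have key : s (m + 1) ^ m * s (m + 1) ^ (m + 2) ≤ s (m + 1) ^ m * s (m + 2) ^ (m + 1) :=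
      calc s (m + 1) ^ m * s (m + 1) ^ (m + 2) = (s (m + 1) ^ 2) ^ (m + 1) := by ring
        _ ≤ (s m * s (m + 2)) ^ (m + 1) := pow_le_pow_left₀ (sq_nonneg _) (hlc m) _
        _ = s m ^ (m + 1) * s (m + 2) ^ (m + 1) := mul_pow _ _ _
        _ ≤ s (m + 1) ^ m * s (m + 2) ^ (m + 1) :=
          mul_le_mul_of_nonneg_right ih (pow_nonneg (hs _) _)
    rcases (hs (m + 1)).eq_or_lt with h | h
    · rw [← h, zero_pow (by omega)]
      exact pow_nonneg (hs _) _
    · exact le_of_mul_le_mul_left key (pow_pos h m)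

lemma integrableOn_pow_mul_exp_neg (m : ℕ) :
    IntegrableOn (fun x : ℝ => x ^ m * Real.exp (-x)) (Ioi 0) := by
  refine (Real.GammaIntegral_convergent (s := m + 1) (by positivity)).congr_fun
    (fun x _ => ?_) measurableSet_Ioi
  simp only [add_sub_cancel_right, Real.rpow_natCast, mul_comm]

lemma integral_pow_mul_exp_neg (m : ℕ) :
    ∫ x in Ioi 0, x ^ m * Real.exp (-x) = m.factorial := by
  rw [← Real.Gamma_nat_eq_factorial, Real.Gamma_eq_integral (by positivity)]
  refine setIntegral_congr_fun measurableSet_Ioi (fun x _ => ?_)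
  simp only [add_sub_cancel_right, Real.rpow_natCast, mul_comm]

lemma Psi_zero (A : List ℝ) : Psi 0 A = 1 := by simp [Psi, hpoly]

lemma Psi_nil (n : ℕ) : Psi n [] = 0 ^ n := by
  cases n <;> simp [Psi, hpoly]

lemma Psi_succ_cons (a : ℝ) (A : List ℝ) (n : ℕ) :
    Psi (n + 1) (a :: A) = a * (n + 1) * Psi n (a :: A) + Psi (n + 1) A := by
  simp only [Psi, hpoly, Nat.factorial_succ]
  push_cast
  ring

lemma Psi_cons (a : ℝ) (A : List ℝ) (n : ℕ) :
    Psi n (a :: A) = ∑ m ∈ Finset.range (n + 1),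
      (n.choose m : ℝ) * m.factorial * a ^ m * Psi (n - m) A := by
  induction n with
  | zero => simp [Psi_zero]
  | succ n ih =>
    rw [Psi_succ_cons, ih, Finset.sum_range_succ' _ (n + 1), Finset.mul_sum]
    simp only [Nat.choose_zero_right, Nat.factorial_zero, Nat.cast_one, pow_zero, mul_one,
      one_mul, Nat.sub_zero, Nat.add_sub_add_right]
    congr 1
    refine Finset.sum_congr rfl (fun i _ => ?_)
    have hchoose : (n + 1) * (n.choose i * i.factorial) =
        (n + 1).choose (i + 1) * (i + 1).factorial := by
      rw [Nat.factorial_succ, ← mul_assoc _ (i + 1), ← Nat.add_one_mul_choose_eq, mul_assoc]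
    replace hchoose : ((n + 1 : ℕ) : ℝ) * (n.choose i * i.factorial) =
        (n + 1).choose (i + 1) * (i + 1).factorial := by exact_mod_cast hchoose
    push_cast at hchoose
    linear_combination (a ^ i * a * Psi (n - i) A) * hchoose

/-- The linear functional `Xⁿ ↦ Psi n A` on real polynomials. -/
noncomputable def psiFunctional (A : List ℝ) : ℝ[X] →ₗ[ℝ] ℝ :=
  lsum fun n => LinearMap.toSpanSingleton ℝ ℝ (Psi n A)

namespace psiFunctional

lemma monomial_apply (A : List ℝ) (n : ℕ) (c : ℝ) :
    psiFunctional A (monomial n c) = c * Psi n A := by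
  rw [psiFunctional, lsum_apply, sum_monomial_index _ _ (by simp)]
  rfl

lemma X_pow_apply (A : List ℝ) (n : ℕ) : psiFunctional A (X ^ n) = Psi n A := by
  rw [← monomial_one_right_eq_X_pow, monomial_apply, one_mul]

lemma C_mul_apply (A : List ℝ) (u : ℝ) (p : ℝ[X]) :
    psiFunctional A (C u * p) = u * psiFunctional A p := by
  rw [← smul_eq_C_mul, map_smul, smul_eq_mul]

lemma nil_apply (p : ℝ[X]) : psiFunctional [] p = p.eval 0 := by
  rw [psiFunctional, lsum_apply, eval_eq_sum]
  exact Finset.sum_congr rfl fun n _ => by simp [Psi_nil]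

lemma X_add_C_pow_apply (A : List ℝ) (u : ℝ) (n : ℕ) :
    psiFunctional A ((X + C u) ^ n) =
      ∑ m ∈ Finset.range (n + 1), (n.choose m : ℝ) * u ^ (n - m) * Psi m A := by
  rw [add_pow, map_sum]
  refine Finset.sum_congr rfl fun m _ => ?_
  rw [← C_pow, ← C_eq_natCast, mul_assoc, ← C_mul, mul_comm, C_mul_apply, X_pow_apply]
  ring

lemma cons_apply (a : ℝ) (A : List ℝ) (p : ℝ[X]) :
    IntegrableOn (fun x => psiFunctional A (p.comp (X + C (a * x))) * Real.exp (-x)) (Ioi 0) ∧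
    ∫ x in Ioi 0, psiFunctional A (p.comp (X + C (a * x))) * Real.exp (-x) =
      psiFunctional (a :: A) p := by
  induction p using Polynomial.induction_on' with
  | add p q hp hq =>
    simp only [add_comp, map_add, add_mul]
    exact ⟨hp.1.add hq.1, by rw [integral_add hp.1 hq.1, hp.2, hq.2]⟩
  | monomial n c =>
    have expand : ∀ x : ℝ, psiFunctional A ((monomial n c).comp (X + C (a * x))) * Real.exp (-x)
        = ∑ m ∈ Finset.range (n + 1),
            (c * n.choose m * a ^ (n - m) * Psi m A) * (x ^ (n - m) * Real.exp (-x)) := by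
      intro x
      rw [monomial_comp, C_mul_apply, X_add_C_pow_apply, Finset.mul_sum, Finset.sum_mul]
      refine Finset.sum_congr rfl fun m _ => ?_
      ring
    have hint : ∀ m ∈ Finset.range (n + 1), IntegrableOn (fun x : ℝ =>
        (c * n.choose m * a ^ (n - m) * Psi m A) * (x ^ (n - m) * Real.exp (-x))) (Ioi 0) :=
      fun m _ => (integrableOn_pow_mul_exp_neg (n - m)).const_mul _
    simp only [expand]
    refine ⟨integrable_finsetSum _ hint, ?_⟩
    rw [integral_finsetSum _ hint, monomial_apply, Psi_cons, Finset.mul_sum,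
      ← Finset.sum_range_reflect _ (n + 1)]
    refine Finset.sum_congr rfl fun m hm => ?_
    have hmn : m ≤ n := Nat.lt_succ_iff.mp (Finset.mem_range.mp hm)
    rw [integral_const_mul, integral_pow_mul_exp_neg, Nat.add_sub_cancel, Nat.choose_symm hmn,
      Nat.sub_sub_self hmn]
    ring

lemma nonneg_of_nonneg_on_Ici (A : List ℝ) (hA : ∀ x ∈ A, 0 ≤ x) (p : ℝ[X])
    (hp : ∀ x, 0 ≤ x → 0 ≤ p.eval x) : 0 ≤ psiFunctional A p := by
  induction A generalizing p with
  | nil => simpa [nil_apply] using hp 0 le_rfl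
  | cons a A ih =>
    have ha : 0 ≤ a := hA a List.mem_cons_self
    rw [← (cons_apply a A p).2]
    refine setIntegral_nonneg measurableSet_Ioi fun x hx => ?_
    refine mul_nonneg (ih (fun y hy => hA y (List.mem_cons_of_mem a hy)) _ fun y hy => ?_)
      (Real.exp_pos _).le
    simpa using hp _ (add_nonneg hy (mul_nonneg ha (le_of_lt hx)))

end psiFunctional

lemma Psi_nonneg (A : List ℝ) (hA : ∀ x ∈ A, 0 ≤ x) (n : ℕ) : 0 ≤ Psi n A := by
  rw [← psiFunctional.X_pow_apply]
  exact psiFunctional.nonneg_of_nonneg_on_Ici A hA _ fun x hx => by simpa using pow_nonneg hx n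

lemma Psi_succ_sq_le_mul (A : List ℝ) (hA : ∀ x ∈ A, 0 ≤ x) (m : ℕ) :
    Psi (m + 1) A ^ 2 ≤ Psi m A * Psi (m + 2) A := by
  have hquad : ∀ t : ℝ, 0 ≤ Psi m A * (t * t) + 2 * Psi (m + 1) A * t + Psi (m + 2) A := by
    intro t
    have h := psiFunctional.nonneg_of_nonneg_on_Ici A hA (X ^ m * (X + C t) ^ 2)
      fun x hx => by simpa using mul_nonneg (pow_nonneg hx m) (sq_nonneg (x + t))
    have hexpand : (X ^ m * (X + C t) ^ 2 : ℝ[X]) =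
        C (t * t) * X ^ m + C (2 * t) * X ^ (m + 1) + X ^ (m + 2) := by
      simp only [C_mul, C_ofNat]
      ring
    rw [hexpand, map_add, map_add, psiFunctional.C_mul_apply, psiFunctional.C_mul_apply,
      psiFunctional.X_pow_apply, psiFunctional.X_pow_apply, psiFunctional.X_pow_apply] at h
    linarith
  have hdisc := discrim_le_zero hquad
  rw [discrim] at hdisc
  linarith

theorem stmt2 (k : ℕ) (hk : 1 ≤ k) (A : List ℝ) (hA : ∀ x ∈ A, 0 ≤ x) :
    Psi (k - 1) A ^ k ≤ Psi k A ^ (k - 1) := by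
  obtain ⟨m, rfl⟩ : ∃ m, k = m + 1 := ⟨k - 1, by omega⟩
  simpa using pow_succ_le_pow_of_sq_le_mul (Psi_nonneg A hA) (Psi_zero A).le
    (Psi_succ_sq_le_mul A hA) m
end

section
/- In a weighted congestion game with polynomial latency functions of maximum degree d with non-negative coefficients, for every player u and every state S, the cost of u in the weighted congestion game satisfies c_u(S) ≤ ĉ_u(S) ≤ d! · c_u(S), where ĉ_u(S) is the cost of u in the corresponding Ψ-game. -/
open Finset

variable {n : ℕ} {E : Type*} [Fintype E] [DecidableEq E]

/-- `PsiW w k P = k! ·` (sum of all monomials of total degree `k` in the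
weights of the players in `P`). -/
noncomputable def PsiW (w : Fin n → ℝ) (k : ℕ) (P : Finset (Fin n)) : ℝ :=
  (Nat.factorial k : ℝ) * ∑ m ∈ P.sym k, ((m : Multiset (Fin n)).map w).prod

/-- A weighted congestion game with `n` players, resources `E`, and polynomial
latency functions of maximum degree `d` with non-negative coefficients
`a e k` (for `k ≤ d`). The same data also describes the corresponding Ψ-game. -/
structure WCGame (n : ℕ) (E : Type*) [Fintype E] (d : ℕ) where
  /-- weights of the players -/
  w : Fin n → ℝ
  w_pos : ∀ u, 0 < w u
  /-- strategy sets: nonempty collections of nonempty sets of resources -/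
  strat : Fin n → Finset (Finset E)
  strat_ne : ∀ u, (strat u).Nonempty
  strat_mem_ne : ∀ u, ∀ s ∈ strat u, s.Nonempty
  /-- coefficients of the latency functions -/
  a : E → ℕ → ℝ
  a_nonneg : ∀ e k, 0 ≤ a e k

namespace WCGame

variable {d : ℕ} (G : WCGame n E d)

/-- A state assigns a strategy to every player. -/
def IsState (S : Fin n → Finset E) : Prop := ∀ u, S u ∈ G.strat u

/-- The set of players using resource `e` in state `S`. -/
def users (S : Fin n → Finset E) (e : E) : Finset (Fin n) :=
  univ.filter fun u => e ∈ S u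

/-- The cost of player `u` in the weighted congestion game. -/
noncomputable def cost (S : Fin n → Finset E) (u : Fin n) : ℝ :=
  G.w u * ∑ e ∈ S u, ∑ k ∈ Finset.range (d + 1),
    G.a e k * ((users S e).sum G.w) ^ k

/-- The cost of player `u` in the corresponding Ψ-game. -/
noncomputable def pcost (S : Fin n → Finset E) (u : Fin n) : ℝ :=
  G.w u * ∑ e ∈ S u, ∑ k ∈ Finset.range (d + 1),
    G.a e k * PsiW G.w k (users S e)

/-- The potential of the subgame induced by the players in `C`. -/
noncomputable def potOn (C : Finset (Fin n)) (S : Fin n → Finset E) : ℝ :=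
  ∑ e : E, ∑ k ∈ Finset.range (d + 1),
    G.a e k / (k + 1) * PsiW G.w (k + 1) (users S e ∩ C)

/-- The potential function of the Ψ-game. -/
noncomputable def pot (S : Fin n → Finset E) : ℝ := G.potOn univ S

end WCGame

/-!
Expanding `(∑ w)^k` by the multinomial theorem gives each degree-`k` monomial the coefficient
`countPerms`, a multinomial coefficient, which lies between `1` and `k!`; `Ψ_k` gives every
monomial the coefficient `k!`. Hence `(∑ w)^k ≤ Ψ_k ≤ k! (∑ w)^k ≤ d! (∑ w)^k` for nonnegative
weights and `k ≤ d`, and the costs are nonnegative combinations of these terms.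
-/

theorem Multiset.countPerms_le_factorial_card {α : Type*} [DecidableEq α] (m : Multiset α) :
    m.countPerms ≤ (Multiset.card m).factorial := by
  rw [countPerms, Finsupp.multinomial, toFinsupp_sum_eq]
  exact Nat.div_le_self _ _

section PsiW

variable {n : ℕ} {w : Fin n → ℝ}

lemma PsiW_eq_sum (k : ℕ) (P : Finset (Fin n)) :
    PsiW w k P = ∑ m ∈ P.sym k, (k.factorial : ℝ) * ((m : Multiset (Fin n)).map w).prod := by
  rw [PsiW, mul_sum]

lemma pow_sum_le_PsiW (hw : ∀ i, 0 ≤ w i) (k : ℕ) (P : Finset (Fin n)) :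
    (∑ i ∈ P, w i) ^ k ≤ PsiW w k P := by
  rw [sum_pow, PsiW_eq_sum]
  refine sum_le_sum fun m _ ↦ mul_le_mul_of_nonneg_right ?_ (Multiset.prod_map_nonneg fun i _ ↦ hw i)
  have h := (m : Multiset (Fin n)).countPerms_le_factorial_card
  rw [Sym.card_coe] at h
  exact_mod_cast h

lemma PsiW_le_factorial_mul_pow_sum (hw : ∀ i, 0 ≤ w i) (k : ℕ) (P : Finset (Fin n)) :
    PsiW w k P ≤ (k.factorial : ℝ) * (∑ i ∈ P, w i) ^ k := by
  rw [sum_pow, PsiW_eq_sum, mul_sum]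
  refine sum_le_sum fun m _ ↦ ?_
  rw [← mul_assoc]
  refine mul_le_mul_of_nonneg_right ?_ (Multiset.prod_map_nonneg fun i _ ↦ hw i)
  have h : (1 : ℝ) ≤ (m : Multiset (Fin n)).countPerms := by
    exact_mod_cast Nat.multinomial_pos _ _
  exact le_mul_of_one_le_right (Nat.cast_nonneg _) h

end PsiW

theorem stmt10_general {n : ℕ} {E : Type*} [Fintype E] [DecidableEq E] {d : ℕ}
    (G : WCGame n E d) (S : Fin n → Finset E) (u : Fin n) :
    G.cost S u ≤ G.pcost S u ∧
      G.pcost S u ≤ (Nat.factorial d : ℝ) * G.cost S u := by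
  have hw : ∀ i, 0 ≤ G.w i := fun i ↦ (G.w_pos i).le
  refine ⟨?_, ?_⟩
  · unfold WCGame.cost WCGame.pcost
    gcongr with e _ k
    · exact hw u
    · exact G.a_nonneg e k
    · exact pow_sum_le_PsiW hw k _
  · have hscale : (d.factorial : ℝ) * G.cost S u = G.w u * ∑ e ∈ S u, ∑ k ∈ range (d + 1),
        G.a e k * ((d.factorial : ℝ) * ((WCGame.users S e).sum G.w) ^ k) := by
      simp only [WCGame.cost, mul_sum]
      ring_nf
    rw [hscale, WCGame.pcost]
    gcongr with e _ k hk
    · exact hw u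
    · exact G.a_nonneg e k
    refine (PsiW_le_factorial_mul_pow_sum hw k _).trans ?_
    gcongr
    · exact pow_nonneg (sum_nonneg fun i _ ↦ hw i) k
    · exact Nat.lt_succ_iff.mp (mem_range.mp hk)

theorem stmt10 {n : ℕ} {E : Type*} [Fintype E] [DecidableEq E] {d : ℕ}
    (G : WCGame n E d) (S : Fin n → Finset E) (hS : G.IsState S) (u : Fin n) :
    G.cost S u ≤ G.pcost S u ∧
      G.pcost S u ≤ (Nat.factorial d : ℝ) * G.cost S u :=
  stmt10_general G S u
end

section
/- Every Ψ-game of degree d has a pure Nash equilibrium, i.e., a state S such that for every player u and every strategy s'_u ∈ Σ_u, ĉ_u(S) ≤ ĉ_u(S_{−u}, s'_u). -/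
open Finset

variable {n : ℕ} {E : Type*} [Fintype E] [DecidableEq E]

lemma psiW_insert {n : ℕ} (w : Fin n → ℝ) (k : ℕ) {u : Fin n} {P : Finset (Fin n)}
    (hu : u ∉ P) :
    PsiW w (k + 1) (insert u P) =
      PsiW w (k + 1) P + (k + 1) * w u * PsiW w k (insert u P) := by
  classical
  set Q := insert u P with hQ
  have h1 : (Q.sym (k + 1)).filter (fun m => u ∉ m) = P.sym (k + 1) := by
    ext m
    simp only [mem_filter, mem_sym_iff, hQ, mem_insert]
    constructor
    · rintro ⟨h1, h2⟩ a ha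
      rcases h1 a ha with rfl | h; · exact absurd ha h2
      · exact h
    · intro h
      exact ⟨fun a ha => Or.inr (h a ha), fun hum => hu (h u hum)⟩
  have h2 : (Q.sym (k + 1)).filter (fun m => u ∈ m) = (Q.sym k).image (fun m => u ::ₛ m) := by
    ext m
    simp only [mem_filter, mem_image, mem_sym_iff]
    constructor
    · rintro ⟨h1, h2⟩
      refine ⟨m.erase u h2, fun a ha => ?_, Sym.cons_erase h2⟩
      exact h1 a (Multiset.mem_of_mem_erase ha)
    · rintro ⟨m', hm', rfl⟩
      refine ⟨fun a ha => ?_, Sym.mem_cons_self u m'⟩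
      rcases Sym.mem_cons.1 ha with h | h
      · rw [h]; exact mem_insert_self u P
      · exact hm' a h
  have hsum : ∑ m ∈ Q.sym (k + 1), ((m : Multiset (Fin n)).map w).prod
      = ∑ m ∈ P.sym (k + 1), ((m : Multiset (Fin n)).map w).prod
        + w u * ∑ m ∈ Q.sym k, ((m : Multiset (Fin n)).map w).prod := by
    rw [← Finset.sum_filter_add_sum_filter_not (Q.sym (k + 1)) (fun m => u ∉ m), h1]
    congr 1
    have : (Q.sym (k + 1)).filter (fun m => ¬ u ∉ m) = (Q.sym k).image (fun m => u ::ₛ m) := by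
      rw [← h2]; congr 1; ext m; simp
    rw [this, Finset.sum_image, Finset.mul_sum]
    · congr 1; ext m
      simp [Sym.coe_cons, Multiset.map_cons, Multiset.prod_cons]
    · intro a _ b _ h
      exact (Sym.cons_inj_right u a b).1 h
  rw [PsiW, PsiW, PsiW, hsum]
  push_cast [Nat.factorial_succ]
  ring

namespace WCGame

set_option linter.unusedSectionVars false

variable {d : ℕ} (G : WCGame n E d)

lemma users_update (S : Fin n → Finset E) (u : Fin n) (s' : Finset E) (e : E) :
    users (Function.update S u s') e =
      if e ∈ s' then insert u ((users S e).erase u) else (users S e).erase u := by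
  ext v
  by_cases hv : v = u
  · subst hv
    by_cases he : e ∈ s' <;>
      simp [users, Function.update_self, he]
  · by_cases he : e ∈ s' <;>
      simp [users, Function.update_of_ne hv, he, hv]

lemma mem_users_iff (S : Fin n → Finset E) (e : E) (v : Fin n) :
    v ∈ users S e ↔ e ∈ S v := by simp [users]

lemma key (S : Fin n → Finset E) (u : Fin n) (s' : Finset E) (e : E) :
    ∑ k ∈ Finset.range (d + 1), G.a e k / (k + 1) *
        (PsiW G.w (k + 1) (users (Function.update S u s') e) - PsiW G.w (k + 1) (users S e))
      = (if e ∈ s' then G.w u * ∑ k ∈ Finset.range (d + 1),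
            G.a e k * PsiW G.w k (users (Function.update S u s') e) else 0)
        - (if e ∈ S u then G.w u * ∑ k ∈ Finset.range (d + 1),
            G.a e k * PsiW G.w k (users S e) else 0) := by
  have hkne : ∀ k : ℕ, ((k : ℝ) + 1) ≠ 0 := fun k => by positivity
  have hU := users_update S u s' e
  by_cases hs' : e ∈ s' <;> by_cases hSu : e ∈ S u
  · have hu : u ∈ users S e := (mem_users_iff S e u).2 hSu
    have : users (Function.update S u s') e = users S e := by
      rw [hU, if_pos hs', Finset.insert_erase hu]
    rw [this]
    simp [hs', hSu]
  · have hu : u ∉ users S e := fun h => hSu ((mem_users_iff S e u).1 h)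
    have hA : users (Function.update S u s') e = insert u (users S e) := by
      rw [hU, if_pos hs', Finset.erase_eq_of_notMem hu]
    rw [if_pos hs', if_neg hSu, sub_zero, Finset.mul_sum]
    refine Finset.sum_congr rfl fun k _ => ?_
    rw [hA, psiW_insert _ _ hu]
    field_simp
    ring
  · have hu' : u ∉ (users S e).erase u := Finset.notMem_erase u _
    have hu : u ∈ users S e := (mem_users_iff S e u).2 hSu
    have hins : insert u ((users S e).erase u) = users S e := Finset.insert_erase hu
    have hU' : users (Function.update S u s') e = (users S e).erase u := by
      rw [hU, if_neg hs']
    rw [if_neg hs', if_pos hSu, zero_sub, Finset.mul_sum, ← Finset.sum_neg_distrib]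
    refine Finset.sum_congr rfl fun k _ => ?_
    have h := psiW_insert G.w k hu'
    rw [hins] at h
    rw [hU', h]
    field_simp
    ring
  · have hu : u ∉ users S e := fun h => hSu ((mem_users_iff S e u).1 h)
    have : users (Function.update S u s') e = users S e := by
      rw [hU, if_neg hs', Finset.erase_eq_of_notMem hu]
    rw [this]
    simp [hs', hSu]

lemma pot_diff (S : Fin n → Finset E) (u : Fin n) (s' : Finset E) :
    G.pot (Function.update S u s') - G.pot S
      = G.pcost (Function.update S u s') u - G.pcost S u := by
  have h1 : G.pot (Function.update S u s') - G.pot S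
      = ∑ e : E, ∑ k ∈ Finset.range (d + 1), G.a e k / (k + 1) *
          (PsiW G.w (k + 1) (users (Function.update S u s') e)
            - PsiW G.w (k + 1) (users S e)) := by
    simp only [pot, potOn, Finset.inter_univ, ← Finset.sum_sub_distrib, mul_sub]
  rw [h1]
  rw [Finset.sum_congr rfl fun e _ => G.key S u s' e]
  rw [Finset.sum_sub_distrib]
  congr 1
  · rw [← Finset.sum_filter]
    have : (Function.update S u s') u = s' := Function.update_self u s' S
    rw [pcost, this, Finset.mul_sum]
    apply Finset.sum_congr
    · ext e; simp
    · intros; rfl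
  · rw [← Finset.sum_filter, pcost, Finset.mul_sum]
    apply Finset.sum_congr
    · ext e; simp
    · intros; rfl

end WCGame


theorem stmt12 {n : ℕ} {E : Type*} [Fintype E] [DecidableEq E] {d : ℕ}
    (G : WCGame n E d) :
    ∃ S : Fin n → Finset E, G.IsState S ∧
      ∀ u : Fin n, ∀ s' ∈ G.strat u,
        G.pcost S u ≤ G.pcost (Function.update S u s') u := by
  classical
  obtain ⟨S0, hS0⟩ : (Fintype.piFinset G.strat).Nonempty := by
    rw [Fintype.piFinset_nonempty]
    exact G.strat_ne
  obtain ⟨S, hS, hmin⟩ := Finset.exists_min_image (Fintype.piFinset G.strat) G.pot ⟨S0, hS0⟩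
  refine ⟨S, fun u => (Fintype.mem_piFinset.1 hS) u, fun u s' hs' => ?_⟩
  have hS' : Function.update S u s' ∈ Fintype.piFinset G.strat := by
    rw [Fintype.mem_piFinset]
    intro v
    by_cases hv : v = u
    · subst hv; rw [Function.update_self]; exact hs'
    · rw [Function.update_of_ne hv]; exact Fintype.mem_piFinset.1 hS v
  have hle := hmin _ hS'
  have hd := G.pot_diff S u s'
  linarith
end

section
/- Every weighted congestion game with polynomial latency functions of maximum degree d with non-negative coefficients has a d!-approximate pure Nash equilibrium. -/
open Finset

variable {n : ℕ} {E : Type*} [Fintype E] [DecidableEq E]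

/-!
The Ψ-game replaces the load power `L(P)^k` on a resource by `Ψ_k(P) = k! h_k(w_P)`, where
`h_k` is the complete homogeneous symmetric polynomial. The recursion
`Ψ_{k+1}(P) = Ψ_{k+1}(P \ {u}) + (k+1) w_u Ψ_k(P)` for `u ∈ P` makes `pot` an exact potential
of the Ψ-game, so a minimiser of `pot` over the finitely many states is a pure Nash equilibrium
of the Ψ-game. By the multinomial theorem, `L(P)^k = ∑ (multinomial coefficient) · monomial`
with coefficients between `1` and `k!`, hence `L^k ≤ Ψ_k ≤ k! L^k`; so a player's cost is at most
its Ψ-cost, which is at most `d!` times its cost, and the equilibrium of the Ψ-game is a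
`d!`-approximate equilibrium of the original game.
-/

namespace Multiset

theorem countPerms_le_factorial_card_s14 {α : Type*} [DecidableEq α] (m : Multiset α) :
    m.countPerms ≤ (card m).factorial := by
  have hcard : card m = m.toFinsupp.sum fun _ => id := by
    rw [← Finsupp.card_toMultiset, toFinsupp_toMultiset]
  rw [hcard]
  exact Nat.div_le_self _ _

theorem countPerms_pos {α : Type*} [DecidableEq α] (m : Multiset α) : 0 < m.countPerms :=
  Nat.multinomial_pos _ _

end Multiset

namespace Finset

variable {ι R : Type*} [DecidableEq ι]

/-- The complete homogeneous symmetric polynomial `MvPolynomial.hsymm` of degree `k`,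
evaluated at the weights of the elements of `P`. -/
noncomputable def hsymm [CommSemiring R] (P : Finset ι) (w : ι → R) (k : ℕ) : R :=
  ∑ m ∈ P.sym k, ((m : Multiset ι).map w).prod

variable {P : Finset ι} {w : ι → R} {u : ι}

theorem filter_notMem_sym (P : Finset ι) (u : ι) (k : ℕ) :
    (P.sym k).filter (u ∉ ·) = (P.erase u).sym k := by
  ext m
  simp only [mem_filter, mem_sym_iff, mem_erase]
  exact ⟨fun ⟨h, hu⟩ a ha => ⟨fun hau => hu (hau ▸ ha), h a ha⟩,
    fun h => ⟨fun a ha => (h a ha).2, fun hu => (h u hu).1 rfl⟩⟩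

theorem filter_mem_sym_succ (hu : u ∈ P) (k : ℕ) :
    (P.sym (k + 1)).filter (u ∈ ·) = (P.sym k).image (Sym.cons u) := by
  ext m
  simp only [mem_filter, mem_image, mem_sym_iff]
  constructor
  · rintro ⟨h, hum⟩
    obtain ⟨t, rfl⟩ := Sym.exists_cons_of_mem hum
    exact ⟨t, fun a ha => h a (Sym.mem_cons_of_mem ha), rfl⟩
  · rintro ⟨m, h, rfl⟩
    refine ⟨fun a ha => ?_, Sym.mem_cons_self u m⟩
    rcases Sym.mem_cons.1 ha with rfl | ha
    exacts [hu, h a ha]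

theorem hsymm_succ_of_mem [CommSemiring R] (hu : u ∈ P) (k : ℕ) :
    P.hsymm w (k + 1) = (P.erase u).hsymm w (k + 1) + w u * P.hsymm w k := by
  rw [hsymm, ← sum_filter_not_add_sum_filter _ (u ∈ ·), filter_notMem_sym,
    filter_mem_sym_succ hu, sum_image fun _ _ _ _ => (Sym.cons_inj_right u _ _).1, hsymm,
    hsymm, mul_sum]
  simp [Sym.coe_cons]

variable [CommSemiring R] [PartialOrder R] [IsOrderedRing R]

theorem prod_map_nonneg_of_mem_sym (hw : ∀ i ∈ P, 0 ≤ w i) {k : ℕ} {m : Sym ι k}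
    (hm : m ∈ P.sym k) : 0 ≤ ((m : Multiset ι).map w).prod :=
  Multiset.prod_nonneg fun _ hx =>
    let ⟨i, hi, hix⟩ := Multiset.mem_map.1 hx
    hix ▸ hw i (mem_sym_iff.1 hm i hi)

theorem hsymm_nonneg (hw : ∀ i ∈ P, 0 ≤ w i) (k : ℕ) : 0 ≤ P.hsymm w k :=
  sum_nonneg fun _ hm => prod_map_nonneg_of_mem_sym hw hm

theorem hsymm_le_sum_pow (hw : ∀ i ∈ P, 0 ≤ w i) (k : ℕ) :
    P.hsymm w k ≤ P.sum w ^ k := by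
  rw [sum_pow, hsymm]
  exact sum_le_sum fun m hm => le_mul_of_one_le_left (prod_map_nonneg_of_mem_sym hw hm)
    (Nat.cast_one (R := R) ▸ Nat.mono_cast m.val.countPerms_pos)

theorem sum_pow_le_factorial_mul_hsymm (hw : ∀ i ∈ P, 0 ≤ w i) (k : ℕ) :
    P.sum w ^ k ≤ k.factorial * P.hsymm w k := by
  rw [sum_pow, hsymm, mul_sum]
  simp only [Sym.val_eq_coe]
  refine sum_le_sum fun m hm => ?_
  gcongr
  · exact prod_map_nonneg_of_mem_sym hw hm
  · simpa using m.val.countPerms_le_factorial_card_s14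

end Finset

theorem PsiW_eq_factorial_mul_hsymm (w : Fin n → ℝ) (k : ℕ) (P : Finset (Fin n)) :
    PsiW w k P = k.factorial * P.hsymm w k := rfl

theorem PsiW_succ_of_mem {w : Fin n → ℝ} {P : Finset (Fin n)} {u : Fin n} (hu : u ∈ P)
    (k : ℕ) :
    PsiW w (k + 1) P = PsiW w (k + 1) (P.erase u) + (k + 1) * w u * PsiW w k P := by
  simp only [PsiW_eq_factorial_mul_hsymm, Finset.hsymm_succ_of_mem hu, Nat.factorial_succ]
  push_cast
  ring

theorem sum_pow_le_PsiW {w : Fin n → ℝ} {P : Finset (Fin n)} (hw : ∀ i ∈ P, 0 ≤ w i) (k : ℕ) :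
    P.sum w ^ k ≤ PsiW w k P :=
  Finset.sum_pow_le_factorial_mul_hsymm hw k

theorem PsiW_le_factorial_mul_sum_pow {w : Fin n → ℝ} {P : Finset (Fin n)}
    (hw : ∀ i ∈ P, 0 ≤ w i) {k d : ℕ} (hkd : k ≤ d) :
    PsiW w k P ≤ d.factorial * P.sum w ^ k := by
  rw [PsiW_eq_factorial_mul_hsymm]
  gcongr
  · exact Finset.hsymm_nonneg hw k
  · exact Finset.hsymm_le_sum_pow hw k

namespace WCGame

theorem isState_update {E : Type*} [Fintype E] {d : ℕ} (G : WCGame n E d)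
    {S : Fin n → Finset E} (hS : G.IsState S) {u : Fin n} {s : Finset E}
    (hs : s ∈ G.strat u) : G.IsState (Function.update S u s) := by
  intro v
  rcases eq_or_ne v u with rfl | hv
  · simpa using hs
  · simpa [hv] using hS v

theorem exists_isState_forall_le {E : Type*} [Fintype E] {d : ℕ} (G : WCGame n E d)
    (f : (Fin n → Finset E) → ℝ) :
    ∃ S, G.IsState S ∧ ∀ T, G.IsState T → f S ≤ f T :=
  Set.exists_min_image {S | G.IsState S} f (Set.toFinite _)
    ⟨fun u => (G.strat_ne u).choose, fun u => (G.strat_ne u).choose_spec⟩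

theorem mem_users {E : Type*} [DecidableEq E] {S : Fin n → Finset E} {e : E} {u : Fin n} :
    u ∈ users S e ↔ e ∈ S u := by
  simp [users]

theorem users_update_inter_of_notMem {E : Type*} [DecidableEq E] {C : Finset (Fin n)}
    {u : Fin n} (hu : u ∉ C) (S : Fin n → Finset E) (s : Finset E) (e : E) :
    users (Function.update S u s) e ∩ C = users S e ∩ C := by
  ext v
  by_cases hv : v = u
  · subst hv
    simp [hu]
  · simp [users, hv]

variable {d : ℕ} (G : WCGame n E d)

theorem potOn_update_of_notMem {C : Finset (Fin n)} {u : Fin n} (hu : u ∉ C)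
    (S : Fin n → Finset E) (s : Finset E) :
    G.potOn C (Function.update S u s) = G.potOn C S := by
  simp only [potOn, users_update_inter_of_notMem hu]

theorem sum_PsiW_succ_users_eq_ite_add (S : Fin n → Finset E) (u : Fin n) (e : E) :
    ∑ k ∈ range (d + 1), G.a e k / (k + 1) * PsiW G.w (k + 1) (users S e) =
      (if e ∈ S u then G.w u * ∑ k ∈ range (d + 1), G.a e k * PsiW G.w k (users S e) else 0) +
        ∑ k ∈ range (d + 1), G.a e k / (k + 1) * PsiW G.w (k + 1) ((users S e).erase u) := by
  split_ifs with he
  · simp only [PsiW_succ_of_mem (mem_users.2 he), mul_sum, ← sum_add_distrib]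
    refine sum_congr rfl fun k _ => ?_
    field_simp
    ring
  · rw [erase_eq_of_notMem (mt mem_users.1 he), zero_add]

theorem pot_eq_pcost_add_potOn_erase (S : Fin n → Finset E) (u : Fin n) :
    G.pot S = G.pcost S u + G.potOn (univ.erase u) S := by
  simp only [pot, potOn, inter_univ, inter_erase, G.sum_PsiW_succ_users_eq_ite_add S u,
    sum_add_distrib, sum_ite_mem_eq, pcost, mul_sum]

theorem pot_update_sub_pot (S : Fin n → Finset E) (u : Fin n) (s : Finset E) :
    G.pot (Function.update S u s) - G.pot S =
      G.pcost (Function.update S u s) u - G.pcost S u := by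
  rw [pot_eq_pcost_add_potOn_erase _ _ u, pot_eq_pcost_add_potOn_erase _ _ u,
    potOn_update_of_notMem _ (notMem_erase u univ)]
  ring

theorem cost_le_pcost (S : Fin n → Finset E) (u : Fin n) : G.cost S u ≤ G.pcost S u := by
  unfold cost pcost
  gcongr with e _ k
  · exact (G.w_pos u).le
  · exact G.a_nonneg e k
  · exact sum_pow_le_PsiW (fun v _ => (G.w_pos v).le) k

theorem pcost_le_factorial_mul_cost (S : Fin n → Finset E) (u : Fin n) :
    G.pcost S u ≤ d.factorial * G.cost S u := by
  calc G.pcost S u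
      ≤ G.w u * ∑ e ∈ S u, ∑ k ∈ range (d + 1),
          G.a e k * (d.factorial * (users S e).sum G.w ^ k) := by
        unfold pcost
        gcongr with e _ k hk
        · exact (G.w_pos u).le
        · exact G.a_nonneg e k
        · exact PsiW_le_factorial_mul_sum_pow (fun v _ => (G.w_pos v).le)
            (Nat.lt_succ_iff.1 (mem_range.1 hk))
    _ = d.factorial * G.cost S u := by
        simp only [cost, mul_sum, mul_left_comm]

end WCGame

theorem stmt14 {n : ℕ} {E : Type*} [Fintype E] [DecidableEq E] {d : ℕ}
    (G : WCGame n E d) :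
    ∃ S : Fin n → Finset E, G.IsState S ∧
      ∀ u : Fin n, ∀ s' ∈ G.strat u,
        G.cost S u ≤ (Nat.factorial d : ℝ) * G.cost (Function.update S u s') u := by
  obtain ⟨S, hS, hmin⟩ := G.exists_isState_forall_le G.pot
  refine ⟨S, hS, fun u s' hs' => ?_⟩
  calc G.cost S u ≤ G.pcost S u := G.cost_le_pcost S u
    _ ≤ G.pcost (Function.update S u s') u := by
      linarith [G.pot_update_sub_pot S u s', hmin _ (G.isState_update hS hs')]
    _ ≤ d.factorial * G.cost (Function.update S u s') u := G.pcost_le_factorial_mul_cost _ u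
end

section
/- Let S be a state of a Ψ-game of degree d and let B ⊆ A ⊆ N be sets of players. Then the partial potential satisfies Φ^A_B(S) ≤ Φ_B(S), i.e., Φ^A(S) − Φ^{A∖B}(S) ≤ Φ(S) − Φ^{N∖B}(S). -/
open Finset

variable {n : ℕ} {E : Type*} [Fintype E] [DecidableEq E]

lemma psi_diff_le {n : ℕ} {w : Fin n → ℝ} (hw : ∀ u, 0 ≤ w u) (k : ℕ)
    {P Q : Finset (Fin n)} (B : Finset (Fin n)) (hPQ : P ⊆ Q) :
    PsiW w k P - PsiW w k (P \ B) ≤ PsiW w k Q - PsiW w k (Q \ B) := by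
  unfold PsiW
  rw [← mul_sub, ← mul_sub]
  apply mul_le_mul_of_nonneg_left _ (by positivity)
  rw [← Finset.sum_sdiff_eq_sub (Finset.sym_mono Finset.sdiff_subset k),
      ← Finset.sum_sdiff_eq_sub (Finset.sym_mono Finset.sdiff_subset k)]
  apply Finset.sum_le_sum_of_subset_of_nonneg
  · intro m hm
    rw [Finset.mem_sdiff, Finset.mem_sym_iff] at hm ⊢
    simp only [Finset.mem_sym_iff, Finset.mem_sdiff] at hm ⊢
    obtain ⟨h1, h2⟩ := hm
    constructor
    · exact fun a ha => hPQ (h1 a ha)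
    · intro hc
      exact h2 fun a ha => ⟨h1 a ha, (hc a ha).2⟩
  · intro m _ _
    apply Multiset.prod_nonneg
    intro x hx
    obtain ⟨a, _, rfl⟩ := Multiset.mem_map.mp hx
    exact hw a

theorem stmt15 {n : ℕ} {E : Type*} [Fintype E] [DecidableEq E] {d : ℕ}
    (G : WCGame n E d) (S : Fin n → Finset E) (hS : G.IsState S)
    (A B : Finset (Fin n)) (hBA : B ⊆ A) :
    G.potOn A S - G.potOn (A \ B) S ≤ G.pot S - G.potOn (Finset.univ \ B) S := by
  unfold WCGame.pot WCGame.potOn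
  rw [← Finset.sum_sub_distrib, ← Finset.sum_sub_distrib]
  apply Finset.sum_le_sum
  intro e _
  rw [← Finset.sum_sub_distrib, ← Finset.sum_sub_distrib]
  apply Finset.sum_le_sum
  intro k _
  rw [← mul_sub, ← mul_sub]
  apply mul_le_mul_of_nonneg_left _ (div_nonneg (G.a_nonneg e k) (by positivity))
  rw [← Finset.inter_sdiff_assoc, ← Finset.inter_sdiff_assoc, Finset.inter_univ]
  exact psi_diff_le (fun u => (G.w_pos u).le) (k+1) B Finset.inter_subset_left
end

section
/- For every state S of a Ψ-game of degree d and any set of players A ⊆ N, the A-partial potential is bounded by the total cost of players in A: Φ(S) − Φ^{N∖A}(S) ≤ Σ_{u∈A} ĉ_u(S). -/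
open Finset

variable {n : ℕ} {E : Type*} [Fintype E] [DecidableEq E]

/-! Splitting the degree-`k + 1` monomials in the weights of `P ∪ {u}` by whether they contain
`u` gives `Ψ_{k+1}(P ∪ {u}) = Ψ_{k+1}(P) + (k + 1) w_u Ψ_k(P ∪ {u})`. Hence adding a player `u`
to a coalition `C` raises the potential on each resource `e ∈ s_u` by at most
`w_u Σ_k a_{e,k} Ψ_k(N_e(S))`, by monotonicity of `Ψ_k`, and leaves the other resources
unchanged: `Φ^{C ∪ {u}}(S) ≤ Φ^C(S) + ĉ_u(S)`. Adding the players of `A` to `N ∖ A` one at a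
time gives the theorem. -/

section SymProd

variable {α R : Type*} [DecidableEq α] [CommSemiring R] (f : α → R)

lemma sum_sym_succ_insert_prod_map {a : α} {s : Finset α} (ha : a ∉ s) (k : ℕ) :
    ∑ m ∈ (insert a s).sym (k + 1), ((m : Multiset α).map f).prod
      = ∑ m ∈ s.sym (k + 1), ((m : Multiset α).map f).prod
        + f a * ∑ m ∈ (insert a s).sym k, ((m : Multiset α).map f).prod := by
  have without_a : ((insert a s).sym (k + 1)).filter (fun m => a ∉ m) = s.sym (k + 1) := by
    ext m
    simp only [mem_filter, mem_sym_iff, mem_insert]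
    refine ⟨fun ⟨h, hm⟩ b hb => (h b hb).resolve_left (by rintro rfl; exact hm hb),
      fun h => ⟨fun b hb => Or.inr (h b hb), fun hm => ha (h a hm)⟩⟩
  have with_a : ((insert a s).sym (k + 1)).filter (fun m => a ∈ m)
      = ((insert a s).sym k).image (Sym.cons a) := by
    ext m
    simp only [mem_filter, mem_image, mem_sym_iff]
    constructor
    · rintro ⟨h, hm⟩
      refine ⟨m.erase a hm, fun b hb => h b ?_, Sym.cons_erase hm⟩
      exact Multiset.mem_of_mem_erase (Sym.coe_erase hm ▸ Sym.mem_coe.2 hb)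
    · rintro ⟨m', h', rfl⟩
      exact ⟨fun b hb => (Sym.mem_cons.1 hb).elim (· ▸ mem_insert_self a s) (h' b),
        Sym.mem_cons_self a m'⟩
  rw [← sum_filter_not_add_sum_filter _ (fun m => a ∈ m), without_a, with_a,
    sum_image fun x _ y _ h => (Sym.cons_inj_right a x y).1 h, mul_sum]
  simp only [Sym.coe_cons, Multiset.map_cons, Multiset.prod_cons]

end SymProd

section PsiW

variable {w : Fin n → ℝ}

lemma PsiW_nonneg (hw : ∀ u, 0 ≤ w u) (k : ℕ) (P : Finset (Fin n)) : 0 ≤ PsiW w k P :=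
  mul_nonneg (by positivity) <|
    sum_nonneg fun _ _ => Multiset.prod_map_nonneg fun u _ => hw u

lemma PsiW_mono (hw : ∀ u, 0 ≤ w u) (k : ℕ) {P Q : Finset (Fin n)} (h : P ⊆ Q) :
    PsiW w k P ≤ PsiW w k Q :=
  mul_le_mul_of_nonneg_left
    (sum_le_sum_of_subset_of_nonneg (sym_mono h k) fun _ _ _ =>
      Multiset.prod_map_nonneg fun u _ => hw u)
    (by positivity)

lemma PsiW_succ_insert {u : Fin n} {P : Finset (Fin n)} (hu : u ∉ P) (k : ℕ) :
    PsiW w (k + 1) (insert u P) = PsiW w (k + 1) P + (k + 1) * w u * PsiW w k (insert u P) := by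
  simp only [PsiW, sum_sym_succ_insert_prod_map w hu, Nat.factorial_succ]
  push_cast
  ring

lemma PsiW_succ_inter_insert_le (hw : ∀ u, 0 ≤ w u) {u : Fin n} {P C : Finset (Fin n)}
    (huP : u ∈ P) (huC : u ∉ C) (k : ℕ) :
    PsiW w (k + 1) (P ∩ insert u C) ≤ PsiW w (k + 1) (P ∩ C) + (k + 1) * w u * PsiW w k P := by
  have hu : u ∉ P ∩ C := fun h => huC (mem_inter.1 h).2
  rw [inter_insert_of_mem huP, PsiW_succ_insert hu]
  gcongr
  · exact mul_nonneg (by positivity) (hw u)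
  · exact PsiW_mono hw k (insert_subset huP inter_subset_left)

end PsiW

namespace WCGame

variable {d : ℕ} (G : WCGame n E d) (S : Fin n → Finset E)

lemma potOn_resource_insert_le {u : Fin n} {C : Finset (Fin n)} (hu : u ∉ C) (e : E) :
    ∑ k ∈ range (d + 1), G.a e k / (k + 1) * PsiW G.w (k + 1) (users S e ∩ insert u C)
      ≤ ∑ k ∈ range (d + 1), G.a e k / (k + 1) * PsiW G.w (k + 1) (users S e ∩ C)
        + if e ∈ S u then G.w u * ∑ k ∈ range (d + 1), G.a e k * PsiW G.w k (users S e)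
          else 0 := by
  by_cases he : e ∈ S u
  · have huP : u ∈ users S e := by simp [users, he]
    rw [if_pos he, mul_sum, ← sum_add_distrib]
    refine sum_le_sum fun k _ => ?_
    have hk : (0 : ℝ) < k + 1 := by positivity
    calc G.a e k / (k + 1) * PsiW G.w (k + 1) (users S e ∩ insert u C)
        ≤ G.a e k / (k + 1) *
            (PsiW G.w (k + 1) (users S e ∩ C) + (k + 1) * G.w u * PsiW G.w k (users S e)) := by
          gcongr
          · exact div_nonneg (G.a_nonneg e k) hk.le
          · exact PsiW_succ_inter_insert_le (fun v => (G.w_pos v).le) huP hu k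
      _ = _ := by field_simp
  · have huP : u ∉ users S e := by simp [users, he]
    rw [if_neg he, inter_insert_of_notMem huP, add_zero]

lemma potOn_insert_le {u : Fin n} {C : Finset (Fin n)} (hu : u ∉ C) :
    G.potOn (insert u C) S ≤ G.potOn C S + G.pcost S u := by
  calc G.potOn (insert u C) S
      ≤ ∑ e, (∑ k ∈ range (d + 1), G.a e k / (k + 1) * PsiW G.w (k + 1) (users S e ∩ C)
        + if e ∈ S u then G.w u * ∑ k ∈ range (d + 1), G.a e k * PsiW G.w k (users S e)
          else 0) := sum_le_sum fun e _ => G.potOn_resource_insert_le S hu e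
    _ = G.potOn C S + G.pcost S u := by
      rw [sum_add_distrib, sum_ite_mem, univ_inter, pcost, mul_sum, potOn]

lemma potOn_union_le {C A : Finset (Fin n)} (h : Disjoint C A) :
    G.potOn (C ∪ A) S ≤ G.potOn C S + ∑ u ∈ A, G.pcost S u := by
  induction A using Finset.induction_on with
  | empty => simp
  | insert u A hu ih =>
    obtain ⟨huC, hCA⟩ := disjoint_insert_right.1 h
    calc G.potOn (C ∪ insert u A) S
        ≤ G.potOn (C ∪ A) S + G.pcost S u := by
          rw [union_insert]
          exact G.potOn_insert_le S (by simp [huC, hu])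
      _ ≤ G.potOn C S + ∑ v ∈ insert u A, G.pcost S v := by
          rw [sum_insert hu]
          linarith [ih hCA]

end WCGame

theorem stmt17_general {n : ℕ} {E : Type*} [Fintype E] [DecidableEq E] {d : ℕ}
    (G : WCGame n E d) (S : Fin n → Finset E)
    (A : Finset (Fin n)) :
    G.pot S - G.potOn (Finset.univ \ A) S ≤ ∑ u ∈ A, G.pcost S u := by
  have h := G.potOn_union_le S (sdiff_disjoint (s := A) (t := univ))
  rw [sdiff_union_of_subset (subset_univ A)] at h
  rw [WCGame.pot]
  linarith

theorem stmt17 {n : ℕ} {E : Type*} [Fintype E] [DecidableEq E] {d : ℕ}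
    (G : WCGame n E d) (S : Fin n → Finset E) (hS : G.IsState S)
    (A : Finset (Fin n)) :
    G.pot S - G.potOn (Finset.univ \ A) S ≤ ∑ u ∈ A, G.pcost S u :=
  stmt17_general G S A
end

section
/- In a linear weighted congestion game (Ψ-game of degree 1), for every ρ ∈ [1, 11/10], if S is a ρ-approximate pure Nash equilibrium and S* minimizes the potential Φ, then Φ(S) ≤ ((3+√5)/2 + 6(ρ−1)) · Φ(S*). -/
/-
Since Ψ₂(A) ≤ 2 L(A)², the potential Φ(S) is at most the social cost C(S) = Σ_u c_u(S).
A player deviating from S to S*_u adds only its own weight to the loads it meets, so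
summing the ρ-equilibrium inequalities over all players gives C(S) ≤ ρ D with
D = Σ_e (a_{e,0} L*_e + a_{e,1} (L_e L*_e + Q*_e)), where L, L* are the loads under S, S* and
Q*_e is the sum of the squared weights on e under S*. On each resource, Young's
inequality xy ≤ x²/(2φ) + φy²/2 with the golden ratio φ gives the smoothness bound
D ≤ λ C(S) + μ Φ(S*) with λ = (√5 - 1)/4 and μ = (√5 + 5)/4. Hence
C(S) ≤ ρμ/(1 - ρλ) Φ(S*); the ratio equals (3 + √5)/2 at ρ = 1 and grows with slope less
than 6 on [1, 11/10].
-/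

open Finset

variable {n : ℕ} {E : Type*} [Fintype E] [DecidableEq E]

namespace Finset

variable {α R : Type*} [DecidableEq α]

theorem sym_succ_insert (a : α) (s : Finset α) (k : ℕ) :
    (insert a s).sym (k + 1) = s.sym (k + 1) ∪ ((insert a s).sym k).image (Sym.cons a) := by
  ext m
  simp only [mem_union, mem_image, mem_sym_iff, mem_insert]
  constructor
  · intro hm
    by_cases hma : a ∈ m
    · refine .inr ⟨m.erase a hma, fun b hb => hm b ?_, Sym.cons_erase hma⟩
      rw [← Sym.mem_coe, Sym.coe_erase] at hb
      exact Multiset.mem_of_mem_erase hb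
    · exact .inl fun b hb => (hm b hb).resolve_left (by rintro rfl; exact hma hb)
  · rintro (hm | ⟨m, hm, rfl⟩) b hb
    · exact .inr (hm b hb)
    · exact (Sym.mem_cons.mp hb).elim .inl (hm b)

variable [CommSemiring R] (w : α → R)

theorem sum_sym_succ_insert_prod_map {a : α} {s : Finset α} (ha : a ∉ s) (k : ℕ) :
    ∑ m ∈ (insert a s).sym (k + 1), ((m : Multiset α).map w).prod =
      ∑ m ∈ s.sym (k + 1), ((m : Multiset α).map w).prod +
        w a * ∑ m ∈ (insert a s).sym k, ((m : Multiset α).map w).prod := by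
  have hdisj : Disjoint (s.sym (k + 1)) (((insert a s).sym k).image (Sym.cons a)) :=
    disjoint_left.mpr fun m hm hm' => by
      obtain ⟨m, -, rfl⟩ := mem_image.mp hm'
      exact ha (mem_sym_iff.mp hm a (Sym.mem_cons_self a m))
  rw [sym_succ_insert, sum_union hdisj, sum_image fun x _ y _ => (Sym.cons_inj_right a x y).mp,
    mul_sum]
  simp only [Sym.coe_cons, Multiset.map_cons, Multiset.prod_cons]

theorem sum_sym_one_prod_map (s : Finset α) :
    ∑ m ∈ s.sym 1, ((m : Multiset α).map w).prod = ∑ u ∈ s, w u := by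
  induction s using Finset.induction_on with
  | empty => rfl
  | insert a s ha ih =>
    rw [sum_sym_succ_insert_prod_map w ha 0, ih, sum_insert ha, sym_zero, sum_singleton,
      show ((∅ : Sym α 0) : Multiset α) = 0 from rfl, Multiset.map_zero, Multiset.prod_zero,
      mul_one, add_comm]

theorem two_mul_sum_sym_two_prod_map (s : Finset α) :
    2 * ∑ m ∈ s.sym 2, ((m : Multiset α).map w).prod = (∑ u ∈ s, w u) ^ 2 + ∑ u ∈ s, w u ^ 2 := by
  induction s using Finset.induction_on with
  | empty => simp
  | insert a s ha ih =>
    rw [sum_sym_succ_insert_prod_map w ha 1, sum_sym_one_prod_map, sum_insert ha, sum_insert ha,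
      mul_add, ih]
    ring

end Finset

theorem psiW_one (w : Fin n → ℝ) (P : Finset (Fin n)) : PsiW w 1 P = ∑ u ∈ P, w u := by
  rw [PsiW, sum_sym_one_prod_map, Nat.factorial_one, Nat.cast_one, one_mul]

theorem psiW_two (w : Fin n → ℝ) (P : Finset (Fin n)) :
    PsiW w 2 P = (∑ u ∈ P, w u) ^ 2 + ∑ u ∈ P, w u ^ 2 := by
  rw [PsiW, Nat.factorial_two, Nat.cast_ofNat, two_mul_sum_sym_two_prod_map]

-- Young's inequality with weight φ = (1 + √5)/2: the coefficients are 1/(2φ) and φ/2.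
theorem mul_le_golden (x y : ℝ) :
    x * y ≤ (√5 - 1) / 4 * x ^ 2 + (√5 + 1) / 4 * y ^ 2 := by
  have h5 : √5 ^ 2 = 5 := Real.sq_sqrt (by norm_num)
  have hsq : (√5 - 1) / 4 * x ^ 2 + (√5 + 1) / 4 * y ^ 2 - x * y =
      (√5 + 1) / 16 * ((√5 - 1) * x - 2 * y) ^ 2 := by
    linear_combination (x * y / 4 - (√5 - 1) * x ^ 2 / 16) * h5
  rw [← sub_nonneg, hsq]
  positivity

theorem le_mul_of_le_mul_of_le_add {ρ a b C D P : ℝ} (hρ : 0 ≤ ρ) (ha : ρ * a < 1)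
    (hC : C ≤ ρ * D) (hD : D ≤ a * C + b * P) : C ≤ ρ * b / (1 - ρ * a) * P := by
  rw [div_mul_eq_mul_div, le_div_iff₀ (sub_pos.mpr ha)]
  nlinarith [mul_le_mul_of_nonneg_left hD hρ]

theorem mul_sqrt_five_sub_one_div_four_lt_one {ρ : ℝ} (hρ : ρ ≤ 11 / 10) :
    ρ * ((√5 - 1) / 4) < 1 := by
  have h5 : √5 ^ 2 = 5 := Real.sq_sqrt (by norm_num)
  nlinarith [Real.sqrt_nonneg 5]

theorem smoothness_ratio_le {ρ : ℝ} (hρ : ρ ∈ Set.Icc (1 : ℝ) (11 / 10)) :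
    ρ * ((√5 + 5) / 4) / (1 - ρ * ((√5 - 1) / 4)) ≤ (3 + √5) / 2 + 6 * (ρ - 1) := by
  obtain ⟨hρ1, hρ2⟩ := hρ
  have h5 : √5 ^ 2 = 5 := Real.sq_sqrt (by norm_num)
  have hs2 : 2 < √5 := by nlinarith [Real.sqrt_nonneg 5]
  have hs3 : √5 < 9 / 4 := by nlinarith [Real.sqrt_nonneg 5]
  rw [div_le_iff₀ (sub_pos.mpr (mul_sqrt_five_sub_one_div_four_lt_one hρ2))]
  nlinarith [mul_nonneg (sub_nonneg.mpr hρ1) (by linarith : (0 : ℝ) ≤ 4 * √5 - 4 - 6 * (ρ - 1))]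

namespace WCGame

section General

variable {d : ℕ} (G : WCGame n E d)

def load (S : Fin n → Finset E) (e : E) : ℝ := (users S e).sum G.w

def sqLoad (S : Fin n → Finset E) (e : E) : ℝ := ∑ u ∈ users S e, G.w u ^ 2

theorem load_nonneg (S : Fin n → Finset E) (e : E) : 0 ≤ G.load S e :=
  sum_nonneg fun u _ => (G.w_pos u).le

theorem sqLoad_nonneg (S : Fin n → Finset E) (e : E) : 0 ≤ G.sqLoad S e :=
  sum_nonneg fun _ _ => sq_nonneg _

theorem sqLoad_le_load_sq (S : Fin n → Finset E) (e : E) : G.sqLoad S e ≤ G.load S e ^ 2 :=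
  sum_sq_le_sq_sum_of_nonneg fun u _ => (G.w_pos u).le

theorem load_update_le (S : Fin n → Finset E) (u : Fin n) (s : Finset E) (e : E) :
    G.load (Function.update S u s) e ≤ G.load S e + G.w u := by
  have hsub : users (Function.update S u s) e ⊆ insert u (users S e) := by
    intro v hv
    rcases eq_or_ne v u with rfl | hne
    · exact mem_insert_self _ _
    · simp_all [users]
  calc G.load (Function.update S u s) e ≤ (insert u (users S e)).sum G.w :=
        sum_le_sum_of_subset_of_nonneg hsub fun v _ _ => (G.w_pos v).le
    _ ≤ G.load S e + G.w u := by
        by_cases hu : u ∈ users S e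
        · rw [insert_eq_of_mem hu, load]
          linarith [G.w_pos u]
        · rw [sum_insert hu, add_comm, load]

theorem sum_sum_eq_sum_sum_users (T : Fin n → Finset E) (f : Fin n → E → ℝ) :
    ∑ u, ∑ e ∈ T u, f u e = ∑ e, ∑ u ∈ users T e, f u e :=
  sum_comm' fun _ _ => by simp [users]

end General

section Linear

variable (G : WCGame n E 1)

theorem pot_eq (S : Fin n → Finset E) :
    G.pot S = ∑ e, (G.a e 0 * G.load S e + G.a e 1 / 2 * (G.load S e ^ 2 + G.sqLoad S e)) := by
  refine sum_congr rfl fun e _ => ?_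
  rw [sum_range_succ, sum_range_one, inter_univ, psiW_one, psiW_two]
  norm_num [load, sqLoad]

theorem cost_eq (S : Fin n → Finset E) (u : Fin n) :
    G.cost S u = G.w u * ∑ e ∈ S u, (G.a e 0 + G.a e 1 * G.load S e) := by
  simp only [cost, load, sum_range_succ, sum_range_zero, zero_add, pow_zero, mul_one, pow_one]

theorem sum_cost_eq (S : Fin n → Finset E) :
    ∑ u, G.cost S u = ∑ e, (G.a e 0 * G.load S e + G.a e 1 * G.load S e ^ 2) := by
  simp only [cost_eq, mul_sum]
  rw [sum_sum_eq_sum_sum_users]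
  refine sum_congr rfl fun e _ => ?_
  rw [← sum_mul, ← load]
  ring

theorem pot_nonneg (S : Fin n → Finset E) : 0 ≤ G.pot S := by
  rw [pot_eq]
  exact sum_nonneg fun e _ => add_nonneg (mul_nonneg (G.a_nonneg e 0) (G.load_nonneg S e))
    (mul_nonneg (div_nonneg (G.a_nonneg e 1) zero_le_two)
      (add_nonneg (sq_nonneg _) (G.sqLoad_nonneg S e)))

theorem pot_le_sum_cost (S : Fin n → Finset E) : G.pot S ≤ ∑ u, G.cost S u := by
  rw [pot_eq, sum_cost_eq]
  refine sum_le_sum fun e _ => ?_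
  have := G.sqLoad_le_load_sq S e
  have := G.a_nonneg e 1
  nlinarith

def deviationBound (S T : Fin n → Finset E) : ℝ :=
  ∑ e, (G.a e 0 * G.load T e + G.a e 1 * (G.load S e * G.load T e + G.sqLoad T e))

theorem cost_update_le (S : Fin n → Finset E) (u : Fin n) (s : Finset E) :
    G.cost (Function.update S u s) u ≤
      G.w u * ∑ e ∈ s, (G.a e 0 + G.a e 1 * (G.load S e + G.w u)) := by
  rw [cost_eq, Function.update_self]
  gcongr with e
  · exact (G.w_pos u).le
  · exact G.a_nonneg e 1
  · exact G.load_update_le S u s e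

theorem sum_cost_update_le (S T : Fin n → Finset E) :
    ∑ u, G.cost (Function.update S u (T u)) u ≤ G.deviationBound S T := by
  refine (sum_le_sum fun u _ => G.cost_update_le S u (T u)).trans_eq ?_
  rw [sum_congr rfl fun u _ => mul_sum _ _ _, sum_sum_eq_sum_sum_users, deviationBound]
  refine sum_congr rfl fun e _ => ?_
  have expand : ∀ u, G.w u * (G.a e 0 + G.a e 1 * (G.load S e + G.w u)) =
      G.a e 0 * G.w u + G.a e 1 * (G.load S e * G.w u + G.w u ^ 2) := fun u => by ring
  rw [sum_congr rfl fun u _ => expand u, sum_add_distrib, ← mul_sum, ← mul_sum, sum_add_distrib,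
    ← mul_sum]
  rfl

theorem sum_cost_le_of_isApproxEquilibrium {ρ : ℝ} (hρ : 0 ≤ ρ) {S T : Fin n → Finset E}
    (heq : ∀ u, ∀ s' ∈ G.strat u, G.cost S u ≤ ρ * G.cost (Function.update S u s') u)
    (hT : G.IsState T) : ∑ u, G.cost S u ≤ ρ * G.deviationBound S T :=
  calc ∑ u, G.cost S u ≤ ∑ u, ρ * G.cost (Function.update S u (T u)) u :=
        sum_le_sum fun u _ => heq u (T u) (hT u)
    _ ≤ ρ * G.deviationBound S T := by
        rw [← mul_sum]
        exact mul_le_mul_of_nonneg_left (G.sum_cost_update_le S T) hρ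

theorem deviationBound_le (S T : Fin n → Finset E) :
    G.deviationBound S T ≤ (√5 - 1) / 4 * ∑ u, G.cost S u + (√5 + 5) / 4 * G.pot T := by
  have h5 : √5 ^ 2 = 5 := Real.sq_sqrt (by norm_num)
  have hs2 : 2 < √5 := by nlinarith [Real.sqrt_nonneg 5]
  rw [sum_cost_eq, pot_eq, mul_sum, mul_sum, ← sum_add_distrib]
  refine sum_le_sum fun e _ => ?_
  have hl := G.load_nonneg S e
  have hl' := G.load_nonneg T e
  have hq := G.sqLoad_le_load_sq T e
  have h0 : G.load T e ≤ (√5 - 1) / 4 * G.load S e + (√5 + 5) / 4 * G.load T e := by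
    nlinarith
  have h1 : G.load S e * G.load T e + G.sqLoad T e ≤
      (√5 - 1) / 4 * G.load S e ^ 2 + (√5 + 5) / 8 * (G.load T e ^ 2 + G.sqLoad T e) := by
    nlinarith [mul_le_golden (G.load S e) (G.load T e)]
  nlinarith [mul_le_mul_of_nonneg_left h0 (G.a_nonneg e 0),
    mul_le_mul_of_nonneg_left h1 (G.a_nonneg e 1)]

end Linear

end WCGame

theorem stmt19_general {n : ℕ} {E : Type*} [Fintype E] [DecidableEq E]
    (G : WCGame n E 1) (ρ : ℝ) (hρ : ρ ∈ Set.Icc (1 : ℝ) (11 / 10))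
    (S : Fin n → Finset E)
    (heq : ∀ u : Fin n, ∀ s' ∈ G.strat u,
      G.cost S u ≤ ρ * G.cost (Function.update S u s') u)
    (Sstar : Fin n → Finset E) (hSstar : G.IsState Sstar) :
    G.pot S ≤ ((3 + Real.sqrt 5) / 2 + 6 * (ρ - 1)) * G.pot Sstar := by
  have hρ0 : 0 ≤ ρ := zero_le_one.trans hρ.1
  calc G.pot S ≤ ∑ u, G.cost S u := G.pot_le_sum_cost S
    _ ≤ ρ * ((√5 + 5) / 4) / (1 - ρ * ((√5 - 1) / 4)) * G.pot Sstar :=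
        le_mul_of_le_mul_of_le_add hρ0 (mul_sqrt_five_sub_one_div_four_lt_one hρ.2)
          (G.sum_cost_le_of_isApproxEquilibrium hρ0 heq hSstar) (G.deviationBound_le S Sstar)
    _ ≤ ((3 + √5) / 2 + 6 * (ρ - 1)) * G.pot Sstar :=
        mul_le_mul_of_nonneg_right (smoothness_ratio_le hρ) (G.pot_nonneg Sstar)

theorem stmt19 {n : ℕ} {E : Type*} [Fintype E] [DecidableEq E]
    (G : WCGame n E 1) (ρ : ℝ) (hρ : ρ ∈ Set.Icc (1 : ℝ) (11 / 10))
    (S : Fin n → Finset E) (hS : G.IsState S)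
    (heq : ∀ u : Fin n, ∀ s' ∈ G.strat u,
      G.cost S u ≤ ρ * G.cost (Function.update S u s') u)
    (Sstar : Fin n → Finset E) (hSstar : G.IsState Sstar)
    (hmin : ∀ S' : Fin n → Finset E, G.IsState S' → G.pot Sstar ≤ G.pot S') :
    G.pot S ≤ ((3 + Real.sqrt 5) / 2 + 6 * (ρ - 1)) * G.pot Sstar :=
  stmt19_general G ρ hρ S heq Sstar hSstar
end
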